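/- arXiv:1801.08203 — 6 statements merged into one kernel-verified Lean document; each statement's English description precedes it below -/
import Mathlib

section
/- For every n ≥ 2 and every nonzero real number t₀, the image of the Burau specialization Sⁿ_{t₀} : Bₙ → GL_{n-1}(ℝ) is isomorphic as a group to the image of Sⁿ_{t₀⁻¹}; in particular, Sⁿ_{t₀} is injective if and only if Sⁿ_{t₀⁻¹} is injective. -/
/-!
Conjugation by `D = diag(1, t⁻¹, t⁻², …)` sends the Burau matrix of `σᵢ` at `t` to the inverse of
the Burau matrix of `σᵢ` at `t⁻¹`. Since the braid relations are invariant under inverting the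
generators, `σᵢ ↦ σᵢ⁻¹` is an automorphism `ι` of `Bₙ`, and `S_{t⁻¹} = conj_D ∘ S_t ∘ ι`.
Composing with automorphisms on both sides preserves the image up to isomorphism and injectivity.
-/

open Matrix
open scoped MatrixGroups

/-- The braid relations on `m` generators. -/
def braidRels (m : ℕ) : Set (FreeGroup (Fin m)) :=
  { r | (∃ i j : Fin m, (i : ℕ) + 1 = (j : ℕ) ∧
          r = FreeGroup.of i * FreeGroup.of j * FreeGroup.of i *
              (FreeGroup.of j * FreeGroup.of i * FreeGroup.of j)⁻¹) ∨
        (∃ i j : Fin m, (i : ℕ) + 2 ≤ (j : ℕ) ∧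
          r = FreeGroup.of i * FreeGroup.of j * (FreeGroup.of j * FreeGroup.of i)⁻¹) }

/-- The braid group on `n` strands, presented by `n-1` generators and the braid relations. -/
abbrev BraidGroup (n : ℕ) : Type := PresentedGroup (braidRels (n - 1))

/-- The `i`-th Burau matrix of size `m × m` at the parameter `t`: it agrees with the
identity matrix except in row `i`, where the `(i, i-1)` entry is `t` (when it exists),
the `(i, i)` entry is `-t`, and the `(i, i+1)` entry is `1` (when it exists). -/
def burauMat (m : ℕ) (t : ℝ) (i : Fin m) : Matrix (Fin m) (Fin m) ℝ :=
  fun r c =>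
    if r = i then
      if (c : ℕ) + 1 = (i : ℕ) then t
      else if c = i then -t
      else if (c : ℕ) = (i : ℕ) + 1 then 1
      else 0
    else if r = c then 1 else 0

/-- `S` is the Burau specialization of the braid group `Bₙ` at the real parameter `t`. -/
def IsBurauSpec (n : ℕ) (t : ℝ) (S : BraidGroup n →* GL (Fin (n - 1)) ℝ) : Prop :=
  ∀ i : Fin (n - 1),
    (S (PresentedGroup.of i) : Matrix (Fin (n - 1)) (Fin (n - 1)) ℝ) = burauMat (n - 1) t i

section BraidInv

variable {m : ℕ}

lemma braidRels_lift_eq_one {G : Type*} [Group G] {f : Fin m → G}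
    (hbraid : ∀ i j : Fin m, (i : ℕ) + 1 = j → f i * f j * f i = f j * f i * f j)
    (hcomm : ∀ i j : Fin m, (i : ℕ) + 2 ≤ j → f i * f j = f j * f i) :
    ∀ r ∈ braidRels m, FreeGroup.lift f r = 1 := by
  rintro r (⟨i, j, hij, rfl⟩ | ⟨i, j, hij, rfl⟩)
  · simp [hbraid i j hij]
  · simp [hcomm i j hij]

lemma braid_of_mul_of_mul_of {i j : Fin m} (hij : (i : ℕ) + 1 = j) :
    (PresentedGroup.of i * PresentedGroup.of j * PresentedGroup.of i :
      PresentedGroup (braidRels m)) =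
      PresentedGroup.of j * PresentedGroup.of i * PresentedGroup.of j :=
  PresentedGroup.mk_eq_mk_of_mul_inv_mem (Or.inl ⟨i, j, hij, rfl⟩)

lemma braid_of_mul_of_comm {i j : Fin m} (hij : (i : ℕ) + 2 ≤ j) :
    (PresentedGroup.of i * PresentedGroup.of j : PresentedGroup (braidRels m)) =
      PresentedGroup.of j * PresentedGroup.of i :=
  PresentedGroup.mk_eq_mk_of_mul_inv_mem (Or.inr ⟨i, j, hij, rfl⟩)

def braidInvHom (m : ℕ) : PresentedGroup (braidRels m) →* PresentedGroup (braidRels m) :=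
  PresentedGroup.toGroup (f := fun i => (PresentedGroup.of i)⁻¹) <|
    braidRels_lift_eq_one
      (fun i j hij => by simp only [← _root_.mul_inv_rev, ← mul_assoc, braid_of_mul_of_mul_of hij])
      (fun i j hij => by simp only [← _root_.mul_inv_rev, braid_of_mul_of_comm hij])

@[simp]
lemma braidInvHom_of (i : Fin m) :
    braidInvHom m (PresentedGroup.of i) = (PresentedGroup.of i)⁻¹ :=
  PresentedGroup.toGroup.of _

lemma braidInvHom_comp_self : (braidInvHom m).comp (braidInvHom m) = MonoidHom.id _ :=
  PresentedGroup.ext fun i => by simp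

def braidInv (m : ℕ) : PresentedGroup (braidRels m) ≃* PresentedGroup (braidRels m) :=
  (braidInvHom m).toMulEquiv (braidInvHom m) braidInvHom_comp_self braidInvHom_comp_self

@[simp]
lemma braidInv_of (i : Fin m) :
    braidInv m (PresentedGroup.of i) = (PresentedGroup.of i)⁻¹ :=
  braidInvHom_of i

end BraidInv

lemma Matrix.mul_apply_of_forall_ne_row_eq_one {n R : Type*} [Fintype n] [DecidableEq n]
    [Ring R] {M B : Matrix n n R} {i : n} (hB : ∀ k ≠ i, B k = (1 : Matrix n n R) k)
    (r c : n) : (M * B) r c = M r c + M r i * (B i c - (1 : Matrix n n R) i c) := by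
  have hsupp : ∀ k ≠ i, (B - 1) k c = 0 := fun k hk => by simp [hB k hk]
  calc (M * B) r c = (M * 1 + M * (B - 1) : Matrix n n R) r c := by
        rw [← mul_add, add_sub_cancel]
    _ = _ := by
      rw [add_apply, mul_one, mul_apply,
        Finset.sum_eq_single i (fun k _ hk => by rw [hsupp k hk, mul_zero]) (by simp)]
      rfl

lemma burauMat_mul_diagonal_pow_mul_burauMat {m : ℕ} {s t : ℝ} (hst : s * t = 1) (i : Fin m) :
    burauMat m s i * diagonal (fun j : Fin m => s ^ (j : ℕ)) * burauMat m t i =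
      diagonal (fun j : Fin m => s ^ (j : ℕ)) := by
  ext r c
  rw [mul_apply_of_forall_ne_row_eq_one (i := i)
    (fun k hk => by ext c; simp [burauMat, hk, one_apply])]
  simp only [mul_diagonal, diagonal_apply]
  by_cases hr : r = i
  · subst hr
    by_cases hc₁ : (c : ℕ) + 1 = r
    · have hc : c ≠ r := by omega
      have hpow : s ^ (r : ℕ) = s ^ (c : ℕ) * s := by rw [← hc₁, pow_succ]
      simp only [burauMat, ↓reduceIte, hc₁, Nat.add_eq_left, one_ne_zero, hpow, neg_mul,
        one_apply, Ne.symm hc, sub_zero]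
      linear_combination (-s ^ (c : ℕ) * s) * hst
    by_cases hc₂ : c = r
    · subst hc₂
      simp only [burauMat, ↓reduceIte, Nat.add_eq_left, one_ne_zero, neg_mul, one_apply_eq]
      linear_combination s ^ (c : ℕ) * hst
    have hc₂' : r ≠ c := Ne.symm hc₂
    by_cases hc₃ : (c : ℕ) = r + 1
    · have hpow : s ^ (c : ℕ) = s ^ (r : ℕ) * s := by rw [hc₃, pow_succ]
      simp only [burauMat, ↓reduceIte, hc₁, hc₂, eq_true hc₃, hpow, one_mul, Nat.add_eq_left,
        one_ne_zero, neg_mul, one_apply, hc₂', sub_zero, mul_one]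
      ring
    · simp [burauMat, hc₁, hc₂, hc₂', hc₃, one_apply]
  · rcases eq_or_ne r c with rfl | hrc <;> simp [burauMat, *]

lemma MonoidHom.nonempty_range_mulEquiv_comp {G G' H H' : Type*} [Group G] [Group G'] [Group H]
    [Group H'] (f : G →* H) (α : G' ≃* G) (β : H ≃* H') :
    Nonempty (f.range ≃* ((β : H →* H').comp (f.comp (α : G' →* G))).range) := by
  rw [MonoidHom.range_comp, MonoidHom.range_comp, MulEquiv.range_eq_top, ← MonoidHom.range_eq_map]
  exact ⟨MulEquiv.subgroupMap β f.range⟩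

lemma IsBurauSpec.exists_eq_conj_comp_braidInv {n : ℕ} {t : ℝ} (ht : t ≠ 0)
    {S₁ S₂ : BraidGroup n →* GL (Fin (n - 1)) ℝ} (h₁ : IsBurauSpec n t S₁)
    (h₂ : IsBurauSpec n t⁻¹ S₂) :
    ∃ D : GL (Fin (n - 1)) ℝ,
      S₂ = (MulAut.conj D : GL (Fin (n - 1)) ℝ →* GL (Fin (n - 1)) ℝ).comp
        (S₁.comp (braidInv (n - 1) : BraidGroup n →* BraidGroup n)) := by
  let D : GL (Fin (n - 1)) ℝ := (isUnit_diagonal.2 <| Pi.isUnit_iff.2 fun j : Fin (n - 1) =>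
    (inv_ne_zero ht).isUnit.pow (j : ℕ)).unit
  refine ⟨D, PresentedGroup.ext fun i => ?_⟩
  have hkey : S₂ (.of i) * D * S₁ (.of i) = D := Units.ext <| by
    simpa [h₁ i, h₂ i, D] using burauMat_mul_diagonal_pow_mul_burauMat (inv_mul_cancel₀ ht) i
  simp only [MonoidHom.coe_comp, MonoidHom.coe_coe, Function.comp_apply, braidInv_of, map_inv,
    MulAut.conj_apply]
  rw [eq_inv_iff_mul_eq_one, ← mul_assoc, ← mul_assoc, hkey, mul_inv_cancel]

theorem burau_image_iso_of_inv_param_general (n : ℕ) (t₀ : ℝ) (ht : t₀ ≠ 0)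
    (S₁ S₂ : BraidGroup n →* GL (Fin (n - 1)) ℝ)
    (h₁ : IsBurauSpec n t₀ S₁) (h₂ : IsBurauSpec n t₀⁻¹ S₂) :
    Nonempty (↥S₁.range ≃* ↥S₂.range) ∧
      (Function.Injective S₁ ↔ Function.Injective S₂) := by
  obtain ⟨D, rfl⟩ := IsBurauSpec.exists_eq_conj_comp_braidInv ht h₁ h₂
  refine ⟨MonoidHom.nonempty_range_mulEquiv_comp _ _ _, ?_⟩
  simp [EquivLike.injective_comp]

theorem burau_image_iso_of_inv_param (n : ℕ) (hn : 2 ≤ n) (t₀ : ℝ) (ht : t₀ ≠ 0)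
    (S₁ S₂ : BraidGroup n →* GL (Fin (n - 1)) ℝ)
    (h₁ : IsBurauSpec n t₀ S₁) (h₂ : IsBurauSpec n t₀⁻¹ S₂) :
    Nonempty (↥S₁.range ≃* ↥S₂.range) ∧
      (Function.Injective S₁ ↔ Function.Injective S₂) :=
  burau_image_iso_of_inv_param_general n t₀ ht S₁ S₂ h₁ h₂
end

section
/- Let t₀ be a real number with t₀ ∉ {0, 1, -1}. If the restriction of the Burau specialization S_{t₀} : B₃ → GL₂(ℝ) to the subgroup N is injective, then S_{t₀} is injective on all of B₃. -/
open Matrix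
open scoped MatrixGroups

/-- The braid group on three strands. -/
abbrev B3 : Type := BraidGroup 3

/-- The standard generators of `B3`. -/
def b3 (i : Fin 2) : B3 := PresentedGroup.of i

/-- `S` is the Burau specialization of `B3` at the real parameter `t₀`. -/
def IsBurau3 (t₀ : ℝ) (S : B3 →* GL (Fin 2) ℝ) : Prop :=
  (S (b3 0) : Matrix (Fin 2) (Fin 2) ℝ) = !![-t₀, 1; 0, 1] ∧
  (S (b3 1) : Matrix (Fin 2) (Fin 2) ℝ) = !![1, 0; t₀, -t₀]

/-- The element `a₁ = σ₁⁻¹σ₂` of `B3`. -/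
def a₁ : B3 := (b3 0)⁻¹ * b3 1

/-- The element `a₂ = σ₂σ₁⁻¹` of `B3`. -/
def a₂ : B3 := b3 1 * (b3 0)⁻¹

/-- The (normal) subgroup `N` of `B3` generated by `a₁` and `a₂`. -/
def N3 : Subgroup B3 := Subgroup.closure {a₁, a₂}

/-!
Taking determinants, `det (S g) = (-t₀) ^ e(g)` with `e` the exponent sum, so for `|t₀| ≠ 1`
every element of `ker S` has exponent sum `0`. Conversely `ker e ≤ N`: the subgroup `N` is
normal, and modulo `N` the two generators coincide, so the quotient map `B₃ → B₃ ⧸ N` is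
`g ↦ σ₁ ^ e(g)`. Hence `ker S ≤ N`, where `S` is injective by assumption.
-/

namespace BraidGroup

variable {n : ℕ}

theorem of_mul_of_mul_of {i j : Fin (n - 1)} (hij : (i : ℕ) + 1 = j) :
    (PresentedGroup.of i * PresentedGroup.of j * PresentedGroup.of i : BraidGroup n) =
      PresentedGroup.of j * PresentedGroup.of i * PresentedGroup.of j :=
  PresentedGroup.mk_eq_mk_of_mul_inv_mem (Or.inl ⟨i, j, hij, rfl⟩)

theorem lift_ofAdd_one_of_mem_braidRels {m : ℕ} :
    ∀ r ∈ braidRels m, FreeGroup.lift (fun _ ↦ Multiplicative.ofAdd (1 : ℤ)) r = 1 := by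
  rintro r (⟨i, j, -, rfl⟩ | ⟨i, j, -, rfl⟩) <;> simp

def exponentSum (n : ℕ) : BraidGroup n →* Multiplicative ℤ :=
  PresentedGroup.toGroup lift_ofAdd_one_of_mem_braidRels

@[simp]
theorem exponentSum_of (i : Fin (n - 1)) :
    exponentSum n (PresentedGroup.of i) = Multiplicative.ofAdd 1 :=
  PresentedGroup.toGroup.of _

theorem eq_zpowersHom_comp_exponentSum {G : Type*} [Group G] (φ : BraidGroup n →* G) (g : G)
    (hφ : ∀ i, φ (PresentedGroup.of i) = g) : φ = (zpowersHom G g).comp (exponentSum n) :=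
  PresentedGroup.ext fun i ↦ by simp [hφ]

end BraidGroup

theorem MonoidHom.injective_of_ker_le {G M : Type*} [Group G] [MulOneClass M] (f : G →* M)
    {K : Subgroup G} (hK : f.ker ≤ K) (hf : Function.Injective (f.domRestrict K)) :
    Function.Injective f := by
  rw [injective_iff_map_eq_one]
  intro g hg
  have : f.domRestrict K ⟨g, hK hg⟩ = f.domRestrict K 1 := by simpa using hg
  simpa using congrArg Subtype.val (hf this)

theorem a₁_mem_N3 : a₁ ∈ N3 := Subgroup.subset_closure (by simp)

theorem a₂_mem_N3 : a₂ ∈ N3 := Subgroup.subset_closure (by simp)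

theorem b3_zero_conj_a₁ : b3 0 * a₁ * (b3 0)⁻¹ = a₂ := by
  simp [a₁, a₂]

theorem b3_zero_conj_a₂ : b3 0 * a₂ * (b3 0)⁻¹ = a₁⁻¹ * a₂ := by
  have braid : b3 0 * b3 1 * b3 0 = b3 1 * b3 0 * b3 1 := BraidGroup.of_mul_of_mul_of rfl
  calc b3 0 * a₂ * (b3 0)⁻¹ = (b3 1)⁻¹ * (b3 1 * b3 0 * b3 1) * ((b3 0)⁻¹ * (b3 0)⁻¹) := by
        simp only [a₂]; group
    _ = (b3 1)⁻¹ * (b3 0 * b3 1 * b3 0) * ((b3 0)⁻¹ * (b3 0)⁻¹) := by rw [braid]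
    _ = a₁⁻¹ * a₂ := by simp only [a₁, a₂]; group

theorem b3_zero_mem_normalizer_N3 : b3 0 ∈ Subgroup.normalizer (N3 : Set B3) := by
  rw [Subgroup.mem_normalizer_iff_map_conj_eq, N3, MonoidHom.map_closure]
  simp only [MonoidHom.coe_coe, Set.image_pair, MulAut.conj_apply, b3_zero_conj_a₁,
    b3_zero_conj_a₂]
  have ha₁ : a₁ = a₂ * (a₁⁻¹ * a₂)⁻¹ := by group
  refine le_antisymm (Subgroup.closure_le _ |>.mpr ?_) (Subgroup.closure_le _ |>.mpr ?_)
  · exact Set.pair_subset a₂_mem_N3 (mul_mem (inv_mem a₁_mem_N3) a₂_mem_N3)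
  · refine Set.pair_subset ?_ (Subgroup.subset_closure (by simp))
    rw [ha₁]
    exact mul_mem (Subgroup.subset_closure (by simp))
      (inv_mem (Subgroup.subset_closure (by simp)))

instance N3_normal : N3.Normal := by
  rw [← Subgroup.normalizer_eq_top_iff, eq_top_iff, ← PresentedGroup.closure_range_of,
    Subgroup.closure_le]
  rintro _ ⟨i, rfl⟩
  fin_cases i
  · exact b3_zero_mem_normalizer_N3
  · show b3 1 ∈ _
    have : b3 1 = a₂ * b3 0 := by simp [a₂]
    exact this ▸ mul_mem (Subgroup.le_normalizer a₂_mem_N3) b3_zero_mem_normalizer_N3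

theorem ker_exponentSum_le_N3 : (BraidGroup.exponentSum 3).ker ≤ N3 := by
  have hquot := BraidGroup.eq_zpowersHom_comp_exponentSum (QuotientGroup.mk' N3)
    (b3 0 : B3 ⧸ N3) fun i ↦ by
      fin_cases i
      · rfl
      · show QuotientGroup.mk (b3 1) = _
        exact QuotientGroup.eq.mpr (by simpa [a₁] using inv_mem a₁_mem_N3)
  intro g hg
  rw [← QuotientGroup.eq_one_iff, ← QuotientGroup.mk'_apply, hquot]
  simp [MonoidHom.mem_ker.mp hg]

theorem IsBurau3.det_comp_eq {t₀ : ℝ} {S : B3 →* GL (Fin 2) ℝ} (hS : IsBurau3 t₀ S)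
    (h0 : t₀ ≠ 0) :
    GeneralLinearGroup.det.comp S =
      (zpowersHom ℝˣ (Units.mk0 (-t₀) (neg_ne_zero.mpr h0))).comp (BraidGroup.exponentSum 3) :=
  BraidGroup.eq_zpowersHom_comp_exponentSum _ _ fun i ↦ by
    ext
    fin_cases i
    · simp [show S (PresentedGroup.of 0) = S (b3 0) from rfl, hS.1]
    · simp [show S (PresentedGroup.of 1) = S (b3 1) from rfl, hS.2]

theorem IsBurau3.ker_le_ker_exponentSum {t₀ : ℝ} {S : B3 →* GL (Fin 2) ℝ} (hS : IsBurau3 t₀ S)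
    (h0 : t₀ ≠ 0) (h1 : |t₀| ≠ 1) : S.ker ≤ (BraidGroup.exponentSum 3).ker := by
  intro g hg
  have hdet : (-t₀) ^ (BraidGroup.exponentSum 3 g).toAdd = 1 := by
    simpa [MonoidHom.mem_ker.mp hg] using congr(Units.val ($(hS.det_comp_eq h0) g)).symm
  have habs : |t₀| ^ (BraidGroup.exponentSum 3 g).toAdd = 1 := by
    simpa [abs_zpow] using congrArg abs hdet
  exact (zpow_eq_one_iff_right₀ (abs_nonneg _) h1).mp habs

theorem burau_B3_faithful_of_faithful_on_N (t₀ : ℝ) (h0 : t₀ ≠ 0) (h1 : t₀ ≠ 1) (hm1 : t₀ ≠ -1)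
    (S : B3 →* GL (Fin 2) ℝ) (hS : IsBurau3 t₀ S)
    (hN : Function.Injective (S.domRestrict N3)) :
    Function.Injective S := by
  have habs : |t₀| ≠ 1 := by
    rw [Ne, abs_eq zero_le_one]
    exact not_or.mpr ⟨h1, hm1⟩
  exact S.injective_of_ker_le ((hS.ker_le_ker_exponentSum h0 habs).trans ker_exponentSum_le_N3) hN
end

section
/- Let a be an integer with |a| > 2 and let α be a real root of x² - a·x + 1, so that α is a real quadratic algebraic integer whose Galois conjugate is α⁻¹. Then for every n ≥ 2, the image of the Burau specialization Sⁿ_α : Bₙ → GL_{n-1}(ℝ) is a discrete subgroup of GL_{n-1}(ℝ). -/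
open Matrix
open scoped MatrixGroups

/-!
Let `R = ℤ[ω]` with `ω² = aω - 1`, and let `φ : R → ℝ` send `ω` to `α`, so that `φ ∘ star` sends
`ω` to `a - α = α⁻¹`. The Burau generators at `ω` are invertible over `R` and unitary for Squier's
form `J = J(star ω)`: `star B * J * B = J`. Hence every element of the image of the Burau
specialization is `φ(A)` for an `R`-matrix `A` in the unitary group of `J`. For such `A` the
conjugate matrix `φ(star A)` equals `(φ J * φ(A)⁻¹ * (φ J)⁻¹)ᵀ`, a continuous function of `φ(A)`,
provided `φ J` is invertible; this holds because the symmetric part of `φ J` is `a - α + 1 ≠ 0`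
times a positive definite matrix. Since `α ≠ a - α`, the integer coordinates of `A` are then
continuous functions of `φ(A)`, and a continuous injection into a lattice has discrete domain.
-/

open Matrix Finset
open scoped QuadraticAlgebra

lemma two_mul_sum_sq_sub_mul_succ (y : ℕ → ℝ) (m : ℕ) (hm : y m = 0) :
    2 * ∑ k ∈ range m, (y k ^ 2 - y k * y (k + 1)) =
      y 0 ^ 2 + ∑ k ∈ range m, (y k - y (k + 1)) ^ 2 := by
  induction m generalizing y with
  | zero => simp [hm]
  | succ m ih =>
    rw [sum_range_succ', sum_range_succ', mul_add, ih (fun k => y (k + 1)) hm]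
    ring

lemma eq_zero_of_sum_sq_sub_mul_succ_eq_zero {y : ℕ → ℝ} {m : ℕ} (hm : y m = 0)
    (h : ∑ k ∈ range m, (y k ^ 2 - y k * y (k + 1)) = 0) : ∀ k ≤ m, y k = 0 := by
  have h2 := two_mul_sum_sq_sub_mul_succ y m hm
  rw [h, mul_zero, eq_comm, add_eq_zero_iff_of_nonneg (sq_nonneg _)
    (sum_nonneg fun k _ => sq_nonneg _), sum_eq_zero_iff_of_nonneg fun k _ => sq_nonneg _] at h2
  intro k hk
  induction k with
  | zero => exact pow_eq_zero_iff two_ne_zero |>.1 h2.1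
  | succ k ih =>
    have := pow_eq_zero_iff two_ne_zero |>.1 (h2.2 k (mem_range.2 hk))
    linarith [ih (by omega)]

lemma extend_val_eq_zero_of_le {M : Type*} [Zero M] {m : ℕ} (x : Fin m → M) {k : ℕ}
    (hk : m ≤ k) : Function.extend Fin.val x 0 k = 0 := by
  rw [Function.extend_apply' _ _ _ (by rintro ⟨c, rfl⟩; exact c.isLt.not_ge hk)]
  rfl

section Burau

variable {K : Type*} [CommRing K] {m : ℕ}

/-- Row `i` of `burauMat m t i - 1`. -/
def burauRow (t : K) (i : Fin m) : Fin m → K := fun c =>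
  if (c : ℕ) + 1 = i then t
  else if c = i then -(t + 1)
  else if (c : ℕ) = i + 1 then 1
  else 0

def burauMatrix (t : K) (i : Fin m) : Matrix (Fin m) (Fin m) K :=
  1 + vecMulVec (Pi.single i 1) (burauRow t i)

def upShift : Matrix (Fin m) (Fin m) K := of fun r c => if (r : ℕ) + 1 = c then 1 else 0

def squierForm (t : K) : Matrix (Fin m) (Fin m) K := (t + 1) • 1 - t • upShift - upShiftᵀ

lemma burauMat_eq_burauMatrix (t : ℝ) (i : Fin m) : burauMat m t i = burauMatrix t i := by
  ext r c
  simp only [burauMat, burauMatrix, burauRow, Matrix.add_apply, one_apply, vecMulVec_apply,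
    Pi.single_apply, Fin.ext_iff]
  split_ifs <;> first | omega | ring1

lemma map_burauMatrix {L : Type*} [CommRing L] (f : K →+* L) (t : K) (i : Fin m) :
    (burauMatrix t i).map f = burauMatrix (f t) i := by
  ext r c
  simp only [burauMatrix, burauRow, map_apply, Matrix.add_apply, one_apply, vecMulVec_apply,
    Pi.single_apply]
  split_ifs <;> simp

lemma map_squierForm {L : Type*} [CommRing L] (f : K →+* L) (t : K) :
    (squierForm t : Matrix (Fin m) (Fin m) K).map f = squierForm (f t) := by
  ext r c
  simp only [squierForm, upShift, map_apply, Matrix.sub_apply, Matrix.smul_apply, one_apply,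
    transpose_apply, of_apply, smul_eq_mul]
  split_ifs <;> simp

lemma burauRow_self (t : K) (i : Fin m) : burauRow t i i = -(t + 1) := by
  simp [burauRow]

lemma squierForm_col (t : K) (i : Fin m) : (squierForm t).col i = -burauRow t i := by
  ext r
  simp only [squierForm, upShift, burauRow, col_apply, Matrix.sub_apply, Matrix.smul_apply,
    one_apply, transpose_apply, of_apply, smul_eq_mul, Pi.neg_apply, Fin.ext_iff]
  split_ifs <;> first | omega | ring1

lemma squierForm_row {t s : K} (hts : t * s = 1) (i : Fin m) :
    (squierForm t).row i = -t • burauRow s i := by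
  ext c
  simp only [squierForm, upShift, burauRow, row_apply, Matrix.sub_apply, Matrix.smul_apply,
    one_apply, transpose_apply, of_apply, smul_eq_mul, Pi.smul_apply, Fin.ext_iff]
  split_ifs <;> first | omega | linear_combination hts | linear_combination -hts | ring1

lemma burauMatrix_mul_inv {t s : K} (hts : t * s = 1) (i : Fin m) :
    burauMatrix t i * (1 + s • vecMulVec (Pi.single i 1) (burauRow t i)) = 1 := by
  rw [burauMatrix, mul_add, add_mul, add_mul, mul_one, one_mul, mul_smul_comm,
    vecMulVec_mul_vecMulVec, dotProduct_single_one, burauRow_self, vecMulVec_smul, mul_one]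
  linear_combination (norm := module) -hts • vecMulVec (Pi.single i (1 : K)) (burauRow t i)

lemma transpose_burauMatrix_mul_squierForm_mul_burauMatrix {t s : K} (hts : t * s = 1)
    (i : Fin m) :
    (burauMatrix t i)ᵀ * squierForm t * burauMatrix s i = squierForm t := by
  rw [burauMatrix, burauMatrix, transpose_add, transpose_one, transpose_vecMulVec, add_mul,
    one_mul, mul_add, mul_one, add_mul, vecMulVec_mul, single_one_vecMul, squierForm_row hts,
    mul_vecMulVec, mul_vecMulVec, mulVec_single_one, squierForm_col, vecMulVec_mulVec,
    dotProduct_single_one, Pi.smul_apply, burauRow_self, op_smul_eq_smul, vecMulVec_smul,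
    neg_vecMulVec, smul_vecMulVec]
  linear_combination (norm := module) hts • vecMulVec (burauRow t i) (burauRow s i)

def burauUnit {t s : K} (hts : t * s = 1) (i : Fin m) : GL (Fin m) K :=
  ⟨burauMatrix t i, 1 + s • vecMulVec (Pi.single i 1) (burauRow t i),
    burauMatrix_mul_inv hts i, mul_eq_one_comm.mp (burauMatrix_mul_inv hts i)⟩

lemma dotProduct_squierForm_mulVec (t : K) (x : Fin m → K) :
    x ⬝ᵥ squierForm t *ᵥ x = (t + 1) * (x ⬝ᵥ x - x ⬝ᵥ upShift *ᵥ x) := by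
  have hT : x ⬝ᵥ upShiftᵀ *ᵥ x = x ⬝ᵥ upShift *ᵥ x := by
    rw [dotProduct_mulVec, vecMul_transpose, dotProduct_comm]
  simp only [squierForm, sub_mulVec, smul_mulVec, one_mulVec, dotProduct_sub, dotProduct_smul,
    hT, smul_eq_mul]
  ring

lemma upShift_mulVec_apply (x : Fin m → K) (r : Fin m) :
    (upShift *ᵥ x) r = Function.extend Fin.val x 0 (r + 1) := by
  set y := Function.extend Fin.val x 0
  have hy : ∀ c : Fin m, x c = y c := fun c => (Fin.val_injective.extend_apply x 0 c).symm
  simp only [mulVec, dotProduct, upShift, of_apply, ite_mul, one_mul, zero_mul, hy]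
  rw [Fin.sum_univ_eq_sum_range (fun k => if (r : ℕ) + 1 = k then y k else 0), sum_ite_eq]
  split_ifs with h
  · rfl
  · exact (extend_val_eq_zero_of_le x (not_lt.1 (mt mem_range.2 h))).symm

lemma eq_zero_of_dotProduct_upShift_mulVec_eq {x : Fin m → ℝ}
    (h : x ⬝ᵥ upShift *ᵥ x = x ⬝ᵥ x) : x = 0 := by
  set y := Function.extend Fin.val x 0
  have hy : ∀ c : Fin m, x c = y c := fun c => (Fin.val_injective.extend_apply x 0 c).symm
  have hsum : ∑ k ∈ range m, (y k ^ 2 - y k * y (k + 1)) = 0 := by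
    simp only [dotProduct, upShift_mulVec_apply, hy] at h
    rw [sum_sub_distrib, ← Fin.sum_univ_eq_sum_range (fun k => y k ^ 2),
      ← Fin.sum_univ_eq_sum_range (fun k => y k * y (k + 1)), h]
    simp [sq]
  have hym : y m = 0 := extend_val_eq_zero_of_le x le_rfl
  funext r
  rw [hy, eq_zero_of_sum_sq_sub_mul_succ_eq_zero hym hsum r r.isLt.le, Pi.zero_apply]

lemma det_squierForm_ne_zero {t : ℝ} (ht : t + 1 ≠ 0) :
    (squierForm t : Matrix (Fin m) (Fin m) ℝ).det ≠ 0 := by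
  intro hdet
  obtain ⟨x, hx0, hx⟩ := exists_mulVec_eq_zero_iff.2 hdet
  have h := dotProduct_squierForm_mulVec t x
  rw [hx, dotProduct_zero, eq_comm, mul_eq_zero, sub_eq_zero] at h
  exact hx0 (eq_zero_of_dotProduct_upShift_mulVec_eq (h.resolve_left ht).symm)

end Burau

section FormUnitaryGroup

variable {n : Type*} [Fintype n] [DecidableEq n]

def formUnitaryGroup {R : Type*} [Ring R] [StarRing R] (J : Matrix n n R) : Subgroup (GL n R) where
  carrier := {A | star (A : Matrix n n R) * J * A = J}
  one_mem' := by simp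
  mul_mem' {A B} (hA : star (A : Matrix n n R) * J * A = J)
      (hB : star (B : Matrix n n R) * J * B = J) := by
    change star (↑(A * B) : Matrix n n R) * J * (↑(A * B) : Matrix n n R) = J
    calc star (↑(A * B) : Matrix n n R) * J * ↑(A * B)
        = star (B : Matrix n n R) * (star (A : Matrix n n R) * J * A) * B := by
          simp only [Units.val_mul, star_mul, mul_assoc]
      _ = J := by rw [hA, hB]
  inv_mem' {A} (hA : star (A : Matrix n n R) * J * A = J) := by
    change star (↑A⁻¹ : Matrix n n R) * J * (↑A⁻¹ : Matrix n n R) = J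
    calc star (↑A⁻¹ : Matrix n n R) * J * ↑A⁻¹
        = star (↑A⁻¹ : Matrix n n R) * (star (A : Matrix n n R) * J * A) * ↑A⁻¹ := by rw [hA]
      _ = star ((A : Matrix n n R) * ↑A⁻¹) * J * (A * ↑A⁻¹) := by
          simp only [star_mul, mul_assoc]
      _ = J := by simp

lemma burauUnit_mem_formUnitaryGroup {K : Type*} [CommRing K] [StarRing K] {m : ℕ} {τ : K}
    (hτ : τ * star τ = 1) (i : Fin m) :
    burauUnit hτ i ∈ formUnitaryGroup (squierForm (star τ)) := by
  change star (burauMatrix τ i) * squierForm (star τ) * burauMatrix τ i = squierForm (star τ)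
  have hstar : (burauMatrix τ i).map star = burauMatrix (star τ) i :=
    map_burauMatrix (starRingEnd K) τ i
  rw [star_eq_conjTranspose, conjTranspose, transpose_map, hstar]
  exact transpose_burauMatrix_mul_squierForm_mul_burauMatrix ((mul_comm _ _).trans hτ) i

lemma range_le_map_formUnitaryGroup {K : Type*} [CommRing K] [StarRing K] (φ : K →+* ℝ)
    {τ : K} (hτ : τ * star τ = 1) {n : ℕ} {S : BraidGroup n →* GL (Fin (n - 1)) ℝ}
    (hS : IsBurauSpec n (φ τ) S) :
    S.range ≤ (formUnitaryGroup (squierForm (star τ))).map (GeneralLinearGroup.map φ) := by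
  rw [MonoidHom.range_eq_map, ← PresentedGroup.closure_range_of, MonoidHom.map_closure,
    Subgroup.closure_le]
  rintro _ ⟨_, ⟨i, rfl⟩, rfl⟩
  refine ⟨burauUnit hτ i, burauUnit_mem_formUnitaryGroup hτ i, Units.ext ?_⟩
  rw [hS i, burauMat_eq_burauMatrix, ← map_burauMatrix]
  rfl

lemma map_star_eq_of_mem_formUnitaryGroup {R S : Type*} [CommRing R] [StarRing R] [CommRing S]
    (φ : R →+* S) {J : Matrix n n R} (hJ : IsUnit (J.map φ).det) {A : GL n R}
    (hA : A ∈ formUnitaryGroup J) :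
    (A : Matrix n n R).map (φ.comp (starRingEnd R)) =
      (J.map φ * (↑(GeneralLinearGroup.map φ A)⁻¹ : Matrix n n S) * (J.map φ)⁻¹)ᵀ := by
  have hφA : (A : Matrix n n R).map φ = ↑(GeneralLinearGroup.map φ A) := rfl
  have hstar : (star (A : Matrix n n R)).map φ =
      ((A : Matrix n n R).map (φ.comp (starRingEnd R)))ᵀ := by
    ext; rfl
  have h := congrArg (fun M => M.map φ) (show star (A : Matrix n n R) * J * A = J from hA)
  simp only [Matrix.map_mul, hstar, hφA] at h
  rw [← transpose_transpose ((A : Matrix n n R).map _)]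
  congr 1
  calc ((A : Matrix n n R).map (φ.comp (starRingEnd R)))ᵀ
      = ((A : Matrix n n R).map (φ.comp (starRingEnd R)))ᵀ * J.map φ *
          ↑(GeneralLinearGroup.map φ A) * ↑(GeneralLinearGroup.map φ A)⁻¹ * (J.map φ)⁻¹ := by
        rw [Units.mul_inv_cancel_right, mul_nonsing_inv_cancel_right _ _ hJ]
    _ = J.map φ * ↑(GeneralLinearGroup.map φ A)⁻¹ * (J.map φ)⁻¹ := by rw [h]

lemma QuadraticAlgebra.ringHom_apply_eq {a b : ℤ} {A : Type*} [Ring A]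
    (φ : QuadraticAlgebra ℤ a b →+* A) (x : QuadraticAlgebra ℤ a b) :
    φ x = x.re + x.im * φ ω := by
  conv_lhs => rw [← QuadraticAlgebra.mk_eta x, QuadraticAlgebra.mk_eq_add_smul_omega]
  simp [zsmul_eq_mul]

lemma QuadraticAlgebra.ringHom_sub_ringHom_star {a b : ℤ} {A : Type*} [Ring A]
    (φ : QuadraticAlgebra ℤ a b →+* A) (x : QuadraticAlgebra ℤ a b) :
    φ x - φ (star x) = x.im * (φ ω - φ (star ω)) := by
  rw [← map_sub, QuadraticAlgebra.sub_star, map_zsmul, map_sub, zsmul_eq_mul]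

lemma QuadraticAlgebra.ringHom_star_omega {a b : ℤ} {A : Type*} [Ring A]
    (φ : QuadraticAlgebra ℤ a b →+* A) : φ (star ω) = b - φ ω := by
  have : star (ω : QuadraticAlgebra ℤ a b) = (b : QuadraticAlgebra ℤ a b) - ω := by
    ext <;> simp [QuadraticAlgebra.omega]
  rw [this, map_sub, map_intCast]

lemma discreteTopology_of_injective_intValued {X ι : Type*} [TopologicalSpace X] [Finite ι]
    {f : X → ι → ℝ} (hf : Continuous f) (hinj : Function.Injective f)
    (hint : ∀ x i, ∃ z : ℤ, f x i = z) : DiscreteTopology X := by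
  choose g hg using hint
  have hg_cont : Continuous g := continuous_pi fun i =>
    Int.isClosedEmbedding_coe_real.isInducing.continuous_iff.2 <| by
      simpa only [Function.comp_def, ← hg] using (continuous_apply i).comp hf
  exact .of_continuous_injective hg_cont fun x y h => hinj <| funext fun i => by rw [hg, hg, h]

lemma map_im_eq_of_mem_formUnitaryGroup {a b : ℤ} (φ : QuadraticAlgebra ℤ a b →+* ℝ)
    (hφ : φ ω ≠ φ (star ω)) {J : Matrix n n (QuadraticAlgebra ℤ a b)}
    (hJ : IsUnit (J.map φ).det) {A : GL n (QuadraticAlgebra ℤ a b)}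
    (hA : A ∈ formUnitaryGroup J) :
    (A : Matrix n n _).map (fun x : QuadraticAlgebra ℤ a b => (x.im : ℝ)) =
      (φ ω - φ (star ω))⁻¹ • ((↑(GeneralLinearGroup.map φ A) : Matrix n n ℝ) -
        (J.map φ * (↑(GeneralLinearGroup.map φ A)⁻¹ : Matrix n n ℝ) * (J.map φ)⁻¹)ᵀ) := by
  rw [← map_star_eq_of_mem_formUnitaryGroup φ hJ hA]
  ext r c
  simp only [Matrix.smul_apply, Matrix.sub_apply, Matrix.map_apply, RingHom.comp_apply,
    starRingEnd_apply, smul_eq_mul, GeneralLinearGroup.map_apply]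
  rw [QuadraticAlgebra.ringHom_sub_ringHom_star φ (A r c), mul_comm (((A r c).im : ℤ) : ℝ),
    inv_mul_cancel_left₀ (sub_ne_zero.2 hφ)]

theorem discreteTopology_map_formUnitaryGroup {a b : ℤ} (φ : QuadraticAlgebra ℤ a b →+* ℝ)
    (hφ : φ ω ≠ φ (star ω)) {J : Matrix n n (QuadraticAlgebra ℤ a b)}
    (hJ : IsUnit (J.map φ).det) :
    DiscreteTopology ((formUnitaryGroup J).map (GeneralLinearGroup.map φ)) := by
  let imPart : GL n ℝ → Matrix n n ℝ := fun M =>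
    (φ ω - φ (star ω))⁻¹ • (↑M - (J.map φ * (↑M⁻¹ : Matrix n n ℝ) * (J.map φ)⁻¹)ᵀ)
  let rePart : GL n ℝ → Matrix n n ℝ := fun M => ↑M - φ ω • imPart M
  have him : ∀ A ∈ formUnitaryGroup J, imPart (GeneralLinearGroup.map φ A) =
      (A : Matrix n n _).map (fun x : QuadraticAlgebra ℤ a b => (x.im : ℝ)) :=
    fun A hA => (map_im_eq_of_mem_formUnitaryGroup φ hφ hJ hA).symm
  have hre : ∀ A ∈ formUnitaryGroup J, rePart (GeneralLinearGroup.map φ A) =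
      (A : Matrix n n _).map (fun x : QuadraticAlgebra ℤ a b => (x.re : ℝ)) := by
    intro A hA
    ext r c
    simp only [rePart, him A hA, Matrix.sub_apply, Matrix.smul_apply, Matrix.map_apply,
      smul_eq_mul, GeneralLinearGroup.map_apply, QuadraticAlgebra.ringHom_apply_eq φ (A r c)]
    ring
  have him_cont : Continuous imPart := (Units.continuous_val.sub
    ((continuous_const.matrix_mul Units.continuous_coe_inv).matrix_mul
      continuous_const).matrix_transpose).const_smul (φ ω - φ (star ω))⁻¹
  have hre_cont : Continuous rePart := Units.continuous_val.sub (him_cont.const_smul (φ ω))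
  refine discreteTopology_of_injective_intValued
    (f := fun M : (formUnitaryGroup J).map (GeneralLinearGroup.map φ) =>
      Sum.elim (fun p : n × n => rePart M p.1 p.2) (fun p : n × n => imPart M p.1 p.2))
    ?_ ?_ ?_
  · refine continuous_pi fun p => ?_
    rcases p with ⟨r, c⟩ | ⟨r, c⟩
    · exact (hre_cont.comp continuous_subtype_val).matrix_elem r c
    · exact (him_cont.comp continuous_subtype_val).matrix_elem r c
  · intro M M' h
    have h_re : rePart M = rePart M' := funext fun r => funext fun c => congrFun h (.inl (r, c))
    have h_im : imPart M = imPart M' := funext fun r => funext fun c => congrFun h (.inr (r, c))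
    simp only [rePart, h_im, sub_left_inj] at h_re
    exact Subtype.ext (Units.ext h_re)
  · rintro ⟨_, A, hA, rfl⟩ (⟨r, c⟩ | ⟨r, c⟩)
    · exact ⟨(A r c).re, by simp only [Sum.elim_inl, hre A hA]; rfl⟩
    · exact ⟨(A r c).im, by simp only [Sum.elim_inr, him A hA]; rfl⟩

end FormUnitaryGroup

theorem burau_discrete_at_quadratic_integer_general (a : ℤ) (ha : 2 < |a|)
    (α : ℝ) (hα : α ^ 2 - (a : ℝ) * α + 1 = 0)
    (n : ℕ)
    (S : BraidGroup n →* GL (Fin (n - 1)) ℝ) (hS : IsBurauSpec n α S) :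
    DiscreteTopology ↥S.range := by
  have ha4 : (4 : ℝ) < (a : ℝ) ^ 2 := by
    have : (4 : ℤ) < a ^ 2 := by nlinarith [sq_abs a]
    exact_mod_cast this
  let φ : QuadraticAlgebra ℤ (-1) a →+* ℝ :=
    QuadraticAlgebra.lift (⟨α, by
      simp only [neg_smul, one_smul, zsmul_eq_mul]; linear_combination hα⟩ :
      {u : ℝ // u * u = (-1 : ℤ) • 1 + a • u})
  have hφω : φ ω = α := by simp [φ]
  have hφω' : φ (star ω) = a - α := by rw [QuadraticAlgebra.ringHom_star_omega, hφω]
  have hωω' : (ω : QuadraticAlgebra ℤ (-1) a) * star ω = 1 := by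
    ext <;> simp [QuadraticAlgebra.omega]
  have hsep : φ ω ≠ φ (star ω) := by
    rw [hφω, hφω']
    intro h
    nlinarith
  have hJ : IsUnit ((squierForm (star ω) : Matrix (Fin (n - 1)) _ _).map φ).det := by
    rw [map_squierForm, hφω']
    refine (det_squierForm_ne_zero fun h => ?_).isUnit
    have ha2 : (a : ℝ) = -2 := by linear_combination hα + (α + 1) * h
    norm_num [ha2] at ha4
  exact (discreteTopology_map_formUnitaryGroup φ hsep hJ).of_subset
    (range_le_map_formUnitaryGroup φ hωω' (hφω ▸ hS))

theorem burau_discrete_at_quadratic_integer (a : ℤ) (ha : 2 < |a|)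
    (α : ℝ) (hα : α ^ 2 - (a : ℝ) * α + 1 = 0)
    (n : ℕ) (hn : 2 ≤ n)
    (S : BraidGroup n →* GL (Fin (n - 1)) ℝ) (hS : IsBurauSpec n α S) :
    DiscreteTopology ↥S.range :=
  burau_discrete_at_quadratic_integer_general a ha α hα n S hS
end

section
/- The subgroup N of B₃ generated by a₁ = σ₁⁻¹σ₂ and a₂ = σ₂σ₁⁻¹ is a normal subgroup of B₃, and N is a free group of rank 2, freely generated by a₁ and a₂. -/
open Matrix
open scoped MatrixGroups

/-!
Conjugation by `σ₁` sends `a₁ ↦ a₂` and, by the braid relation, `a₂ ↦ a₁⁻¹ a₂`; conjugation by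
`σ₁⁻¹` sends `a₁ ↦ a₁ a₂⁻¹` and `a₂ ↦ a₁`. Since `σ₂ = σ₁ a₁`, both generators of `B₃` normalise
`N`.

For freeness, send `B₃` to `GL₂(ℝ)` by the Burau representation at `t = -2`. The images of `a₁`
and `a₂` play ping-pong on the nonzero vectors of `ℝ²`: the lines through `(2, -1)`, `(3, 2)`,
`(1, 3)`, `(-1, 3)` cut the plane into four open double cones, and each generator maps the
complement of its repelling cone into its attracting cone. Hence `FreeGroup (Fin 2) → B₃`,
`of i ↦ aᵢ`, is injective, and its image is `N`.
-/

open Subgroup Set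
open scoped Pointwise

namespace Subgroup

variable {G : Type*} [Group G]

theorem conj_mem_closure_of_conj_mem {s : Set G} {g : G}
    (h : ∀ x ∈ s, g * x * g⁻¹ ∈ closure s) {y : G} (hy : y ∈ closure s) :
    g * y * g⁻¹ ∈ closure s :=
  (closure_le ((closure s).comap (MulAut.conj g).toMonoidHom)).2 h hy

theorem mem_normalizer_closure_of_conj_mem {s : Set G} {g : G}
    (h₁ : ∀ x ∈ s, g * x * g⁻¹ ∈ closure s) (h₂ : ∀ x ∈ s, g⁻¹ * x * g ∈ closure s) :
    g ∈ normalizer (closure s : Set G) := by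
  refine mem_normalizer_iff.2 fun y => ⟨conj_mem_closure_of_conj_mem h₁, fun hy => ?_⟩
  simpa [mul_assoc] using conj_mem_closure_of_conj_mem (g := g⁻¹) (by simpa using h₂) hy

end Subgroup

section BraidRelation

variable {G : Type*} [Group G] {s t : G}

theorem left_mem_normalizer_closure_of_braid (h : s * t * s = t * s * t) :
    s ∈ normalizer (closure {s⁻¹ * t, t * s⁻¹} : Set G) := by
  have mem₁ : s⁻¹ * t ∈ closure {s⁻¹ * t, t * s⁻¹} := subset_closure (by simp)
  have mem₂ : t * s⁻¹ ∈ closure {s⁻¹ * t, t * s⁻¹} := subset_closure (by simp)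
  apply mem_normalizer_closure_of_conj_mem
  · rintro x (rfl | rfl)
    · simpa [mul_assoc] using mem₂
    · have : s * (t * s⁻¹) * s⁻¹ = (s⁻¹ * t)⁻¹ * (t * s⁻¹) :=
        calc s * (t * s⁻¹) * s⁻¹ = t⁻¹ * (t * s * t) * s⁻¹ * s⁻¹ := by group
          _ = t⁻¹ * (s * t * s) * s⁻¹ * s⁻¹ := by rw [h]
          _ = (s⁻¹ * t)⁻¹ * (t * s⁻¹) := by group
      rw [this]
      exact mul_mem (inv_mem mem₁) mem₂
  · rintro x (rfl | rfl)
    · have : s⁻¹ * (s⁻¹ * t) * s = (s⁻¹ * t) * (t * s⁻¹)⁻¹ :=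
        calc s⁻¹ * (s⁻¹ * t) * s = s⁻¹ * s⁻¹ * (t * s * t) * t⁻¹ := by group
          _ = s⁻¹ * s⁻¹ * (s * t * s) * t⁻¹ := by rw [h]
          _ = (s⁻¹ * t) * (t * s⁻¹)⁻¹ := by group
      rw [this]
      exact mul_mem mem₁ (inv_mem mem₂)
    · simpa [mul_assoc] using mem₁

theorem right_mem_normalizer_closure_of_braid (h : s * t * s = t * s * t) :
    t ∈ normalizer (closure {s⁻¹ * t, t * s⁻¹} : Set G) := by
  simpa using mul_mem (left_mem_normalizer_closure_of_braid h)
    (le_normalizer (subset_closure (by simp) : s⁻¹ * t ∈ closure {s⁻¹ * t, t * s⁻¹}))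

end BraidRelation

theorem FreeGroup.injective_lift_of_injective_lift_comp {ι G H : Type*} [Group G] [Group H]
    {a : ι → G} (f : G →* H) (h : Function.Injective (FreeGroup.lift (f ∘ a))) :
    Function.Injective (FreeGroup.lift a) := by
  have : FreeGroup.lift (f ∘ a) = f.comp (FreeGroup.lift a) := by ext; simp
  rw [this, MonoidHom.coe_comp] at h
  exact h.of_comp

theorem FreeGroup.exists_mulEquiv_of_injective_lift {ι G : Type*} [Group G] {a : ι → G}
    (ha : Function.Injective (FreeGroup.lift a)) {H : Subgroup G} (hH : closure (range a) = H) :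
    ∃ e : H ≃* FreeGroup ι, ∀ i (hi : a i ∈ H), e ⟨a i, hi⟩ = FreeGroup.of i := by
  refine ⟨(MulEquiv.subgroupCongr (FreeGroup.range_lift_eq_closure.trans hH).symm).trans
    (MonoidHom.ofInjective ha).symm, fun i hi => ?_⟩
  rw [MulEquiv.trans_apply, MulEquiv.symm_apply_eq]
  ext
  simp [MonoidHom.ofInjective_apply]

theorem Set.inv_smul_compl_subset_of_smul_compl_subset {G α : Type*} [Group G] [MulAction G α]
    {a : G} {X Y : Set α} (h : a • Yᶜ ⊆ X) : a⁻¹ • Xᶜ ⊆ Y := by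
  rw [smul_set_subset_iff_subset_inv_smul_set, inv_inv, ← compl_subset_comm, ← smul_set_compl]
  exact h

theorem pairwise_disjoint_on_fin_two {α : Type*} [PartialOrder α] [OrderBot α] {f : Fin 2 → α}
    (h : Disjoint (f 0) (f 1)) : Pairwise (Function.onFun Disjoint f) := by
  intro i j hij
  fin_cases i <;> fin_cases j
  · exact (hij rfl).elim
  · exact h
  · exact h.symm
  · exact (hij rfl).elim

section Cross

variable {K : Type*} [CommRing K]

def cross (p v : Fin 2 → K) : K := p 0 * v 1 - p 1 * v 0

theorem cross_mul_eq (p q v : Fin 2 → K) (i : Fin 2) :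
    cross p q * v i = cross v q * p i + cross p v * q i := by
  fin_cases i <;> simp [cross] <;> ring

end Cross

section Cone

variable {K : Type*} [Field K] [LinearOrder K] [IsStrictOrderedRing K]

/-- When `0 < cross p q`, this is the open double cone `{±(α • p + β • q) | 0 < α, 0 < β}`. -/
def cone (p q : Fin 2 → K) : Set {v : Fin 2 → K // v ≠ 0} :=
  {v | 0 < cross p v * cross v.1 q}

theorem cone_nonempty {p q : Fin 2 → K} (h : 0 < cross p q) : (cone p q).Nonempty := by
  refine ⟨⟨p + q, fun h0 => ?_⟩, ?_⟩
  · simp [eq_neg_of_add_eq_zero_right h0, cross] at h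
    linarith
  · show 0 < cross p (p + q) * cross (p + q) q
    have e₁ : cross p (p + q) = cross p q := by simp [cross]; ring
    have e₂ : cross (p + q) q = cross p q := by simp [cross]; ring
    rw [e₁, e₂]
    positivity

/-- The directions `p, q, r, s` are in counterclockwise order within a half-turn. -/
theorem disjoint_cone {p q r s : Fin 2 → K} (hpq : 0 < cross p q) (hpr : 0 < cross p r)
    (hqr : 0 ≤ cross q r) (hps : 0 ≤ cross p s) (hqs : 0 < cross q s) :
    Disjoint (cone p q) (cone r s) := by
  refine Set.disjoint_left.2 fun v hv₁ hv₂ => ?_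
  simp only [cone, mem_ofPred_eq] at hv₁ hv₂
  have e₁ : cross p q * cross r v = -(cross v q * cross p r + cross p v * cross q r) := by
    simp only [cross]; ring
  have e₂ : cross p q * cross v s = cross v q * cross p s + cross p v * cross q s := by
    simp only [cross]; ring
  rcases mul_pos_iff.1 hv₁ with ⟨ha, hb⟩ | ⟨ha, hb⟩
  · have h₁ : cross r v < 0 := by nlinarith
    have h₂ : 0 < cross v s := by nlinarith
    nlinarith
  · have h₁ : 0 < cross r v := by nlinarith
    have h₂ : cross v s < 0 := by nlinarith
    nlinarith

/-- The hypotheses say that `g • q` and `-(g • p)` lie in the same sheet of `cone p' q'`; the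
complement of `cone p q` is the closed double cone spanned by `q` and `-p`. -/
theorem smul_compl_cone_subset {g : GL (Fin 2) K} {p q p' q' : Fin 2 → K}
    (hpq : 0 < cross p q) (h₁ : 0 < cross p' (g • q)) (h₂ : 0 < cross (g • q) q')
    (h₃ : 0 < cross (g • p) p') (h₄ : 0 < cross q' (g • p)) :
    g • (cone p q)ᶜ ⊆ cone p' q' := by
  rintro _ ⟨⟨v, hv⟩, hvc, rfl⟩
  simp only [cone, mem_compl_iff, mem_ofPred_eq, not_lt] at hvc
  show 0 < cross p' (g • v) * cross (g • v) q'
  have hab : cross p v ≠ 0 ∨ cross v q ≠ 0 := by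
    by_contra! h
    refine hv (funext fun i => ?_)
    simpa [h.1, h.2, hpq.ne'] using cross_mul_eq p q v i
  have e₁ : cross p q * cross p' (g • v) =
      -(cross v q * cross (g • p) p') + cross p v * cross p' (g • q) := by
    simp [cross]; ring
  have e₂ : cross p q * cross (g • v) q' =
      -(cross v q * cross q' (g • p)) + cross p v * cross (g • q) q' := by
    simp [cross]; ring
  rcases mul_nonpos_iff.1 hvc with ⟨ha, hb⟩ | ⟨ha, hb⟩
  · have : 0 < cross p v ∨ cross v q < 0 := hab.imp ha.lt_of_ne' hb.lt_of_ne
    have k₁ : 0 < cross p' (g • v) := by rcases this with h | h <;> nlinarith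
    have k₂ : 0 < cross (g • v) q' := by rcases this with h | h <;> nlinarith
    positivity
  · have : cross p v < 0 ∨ 0 < cross v q := hab.imp ha.lt_of_ne hb.lt_of_ne'
    have k₁ : cross p' (g • v) < 0 := by rcases this with h | h <;> nlinarith
    have k₂ : cross (g • v) q' < 0 := by rcases this with h | h <;> nlinarith
    nlinarith

end Cone

theorem b3_braid : b3 0 * b3 1 * b3 0 = b3 1 * b3 0 * b3 1 := by
  rw [← mul_inv_eq_one]
  exact (QuotientGroup.eq_one_iff _).2 (subset_normalClosure (Or.inl ⟨0, 1, rfl, rfl⟩))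

theorem closure_range_b3 : closure (range b3) = ⊤ :=
  PresentedGroup.closure_range_of _

theorem N3_normal_s17 : N3.Normal := by
  rw [← normalizer_eq_top_iff, eq_top_iff, ← closure_range_b3, closure_le]
  rintro _ ⟨i, rfl⟩
  fin_cases i
  · exact left_mem_normalizer_closure_of_braid b3_braid
  · exact right_mem_normalizer_closure_of_braid b3_braid

namespace B3

variable {G : Type*} [Group G]

def lift (s t : G) (h : s * t * s = t * s * t) : B3 →* G :=
  PresentedGroup.toGroup (f := ![s, t]) <| by
    rintro r (⟨i, j, hij, rfl⟩ | ⟨i, j, hij, -⟩)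
    · fin_cases i <;> fin_cases j <;> simp_all
    · omega

@[simp] theorem lift_b3_zero (s t : G) (h : s * t * s = t * s * t) : lift s t h (b3 0) = s :=
  PresentedGroup.toGroup.of _

@[simp] theorem lift_b3_one (s t : G) (h : s * t * s = t * s * t) : lift s t h (b3 1) = t :=
  PresentedGroup.toGroup.of _

end B3

noncomputable def burau (t : ℝ) (ht : t ≠ 0) : B3 →* GL (Fin 2) ℝ :=
  B3.lift (.mkOfDetNeZero !![-t, 1; 0, 1] (by simpa [det_fin_two] using ht))
    (.mkOfDetNeZero !![1, 0; t, -t] (by simpa [det_fin_two] using ht))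
    (by ext i j; fin_cases i <;> fin_cases j <;> simp [Matrix.mul_apply])

theorem isBurau3_burau (t : ℝ) (ht : t ≠ 0) : IsBurau3 t (burau t ht) := by
  simp [IsBurau3, burau]

theorem coe_burau_a₁ (t : ℝ) (ht : t ≠ 0) :
    (burau t ht a₁ : Matrix (Fin 2) (Fin 2) ℝ) = !![1 - t⁻¹, -1; t, -t] := by
  obtain ⟨h₀, h₁⟩ := isBurau3_burau t ht
  have h : (burau t ht (b3 0) : Matrix (Fin 2) (Fin 2) ℝ) * !![1 - t⁻¹, -1; t, -t] =
      burau t ht (b3 1) := by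
    rw [h₀, h₁]
    ext i j
    fin_cases i <;> fin_cases j <;> simp [Matrix.mul_apply, mul_sub, ht]
  rw [a₁, map_mul, map_inv, Units.val_mul, ← h, ← mul_assoc, ← Units.val_mul, inv_mul_cancel,
    Units.val_one, one_mul]

theorem coe_burau_a₂ (t : ℝ) (ht : t ≠ 0) :
    (burau t ht a₂ : Matrix (Fin 2) (Fin 2) ℝ) = !![-t⁻¹, t⁻¹; -1, 1 - t] := by
  obtain ⟨h₀, h₁⟩ := isBurau3_burau t ht
  have h : !![-t⁻¹, t⁻¹; -1, 1 - t] * (burau t ht (b3 0) : Matrix (Fin 2) (Fin 2) ℝ) =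
      burau t ht (b3 1) := by
    rw [h₀, h₁]
    ext i j
    fin_cases i <;> fin_cases j <;> simp [Matrix.mul_apply, ht, neg_add_eq_sub]
  rw [a₂, map_mul, map_inv, Units.val_mul, ← h, mul_assoc, ← Units.val_mul, mul_inv_cancel,
    Units.val_one, mul_one]

theorem injective_lift_burau_neg_two_comp :
    Function.Injective (FreeGroup.lift (burau (-2) (by norm_num) ∘ ![a₁, a₂])) := by
  set g := burau (-2) (by norm_num) ∘ ![a₁, a₂]
  have hg₀ : (g 0 : Matrix (Fin 2) (Fin 2) ℝ) = !![3 / 2, -1; -2, 2] := by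
    simp only [g, Function.comp_apply, Matrix.cons_val_zero, coe_burau_a₁]
    norm_num
  have hg₁ : (g 1 : Matrix (Fin 2) (Fin 2) ℝ) = !![1 / 2, -1 / 2; -1, 3] := by
    simp only [g, Function.comp_apply, Matrix.cons_val_one, Matrix.cons_val_zero, coe_burau_a₂]
    norm_num
  let X : Fin 2 → Set {v : Fin 2 → ℝ // v ≠ 0} := ![cone ![-1, 3] ![-2, 1], cone ![1, 3] ![-1, 3]]
  let Y : Fin 2 → Set {v : Fin 2 → ℝ // v ≠ 0} := ![cone ![3, 2] ![1, 3], cone ![2, -1] ![3, 2]]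
  have hX : ∀ i, g i • (Y i)ᶜ ⊆ X i := by
    intro i
    fin_cases i
    · refine smul_compl_cone_subset ?_ ?_ ?_ ?_ ?_ <;> norm_num [cross, hg₀]
    · refine smul_compl_cone_subset ?_ ?_ ?_ ?_ ?_ <;> norm_num [cross, hg₁]
  refine FreeGroup.injective_lift_of_ping_pong g X Y ?_ ?_ ?_ ?_ hX
    (fun i => inv_smul_compl_subset_of_smul_compl_subset (hX i))
  · intro i
    fin_cases i <;> exact cone_nonempty (by norm_num [cross])
  · refine pairwise_disjoint_on_fin_two (disjoint_cone ?_ ?_ ?_ ?_ ?_).symm <;> norm_num [cross]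
  · refine pairwise_disjoint_on_fin_two (disjoint_cone ?_ ?_ ?_ ?_ ?_).symm <;> norm_num [cross]
  · intro i j
    fin_cases i <;> fin_cases j <;> refine (disjoint_cone ?_ ?_ ?_ ?_ ?_).symm <;> norm_num [cross]

theorem N3_normal_and_free :
    N3.Normal ∧
      ∃ e : ↥N3 ≃* FreeGroup (Fin 2),
        e ⟨a₁, Subgroup.subset_closure (Set.mem_insert _ _)⟩ = FreeGroup.of 0 ∧
        e ⟨a₂, Subgroup.subset_closure (Set.mem_insert_of_mem _ rfl)⟩ = FreeGroup.of 1 := by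
  refine ⟨N3_normal_s17, ?_⟩
  have hN3 : closure (range ![a₁, a₂]) = N3 := by
    rw [Matrix.range_cons_cons_empty]
    rfl
  obtain ⟨e, he⟩ := FreeGroup.exists_mulEquiv_of_injective_lift
    (FreeGroup.injective_lift_of_injective_lift_comp _ injective_lift_burau_neg_two_comp) hN3
  exact ⟨e, he 0 _, he 1 _⟩
end

section
/- Let t₀ be a real root of the polynomial t³ - 2t² + t - 1 (this polynomial has exactly one real root). Then (3-√5)/2 < t₀ < (3+√5)/2, the (2,1) entry of S_{t₀}(σ₂⁻²σ₁σ₂⁻¹) equals 0, and the Burau specialization S_{t₀} : B₃ → GL₂(ℝ) is not injective. -/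
open Matrix
open scoped MatrixGroups

/-!
At a root of `t³ - 2t² + t - 1` the matrix `S(γ)`, `γ = σ₂⁻²σ₁σ₂⁻¹`, is upper triangular,
as is `S(σ₁)`. The upper triangular subgroup of `GL₂` is metabelian: commutators in it have unit
diagonal, and such unipotent matrices commute. So `S` maps `⁅σ₁, γ⁆` and `⁅σ₁, γ²⁆` to commuting
matrices, whereas these braids do not commute, as the Burau specialization at `t = -1`
(the classical map `B₃ → SL₂(ℤ)`) shows.
-/

open scoped commutatorElement

theorem commute_commutatorElement_of_ker_commute {G M : Type*} [Group G] [CommMonoid M]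
    (φ : G →* M) (hker : ∀ x y, φ x = 1 → φ y = 1 → Commute x y) (a b c d : G) :
    Commute ⁅a, b⁆ ⁅c, d⁆ := by
  have hφ (a b : G) : φ ⁅a, b⁆ = 1 := by
    rw [← MonoidHom.coe_toHomUnits, map_commutatorElement,
      commutatorElement_eq_one_iff_commute.mpr (.all _ _), Units.val_one]
  exact hker _ _ (hφ a b) (hφ c d)

namespace Matrix.GeneralLinearGroup

variable (R : Type*) [CommRing R]

def upperTriangular : Subgroup (GL (Fin 2) R) where
  carrier := {A | A 1 0 = 0}
  one_mem' := by simp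
  mul_mem' {A B} hA hB := by
    simp_all [mul_apply, Fin.sum_univ_two]
  inv_mem' {A} hA := by
    simp_all [coe_units_inv, inv_def, adjugate_fin_two]

variable {R} in
@[simp]
lemma mem_upperTriangular {A : GL (Fin 2) R} : A ∈ upperTriangular R ↔ A 1 0 = 0 := Iff.rfl

def upperTriangular.diag : upperTriangular R →* R × R where
  toFun A := ((A : GL (Fin 2) R) 0 0, (A : GL (Fin 2) R) 1 1)
  map_one' := by simp
  map_mul' A B := by
    have hA : (A : GL (Fin 2) R) 1 0 = 0 := A.2
    have hB : (B : GL (Fin 2) R) 1 0 = 0 := B.2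
    simp [mul_apply, Fin.sum_univ_two, hA, hB]

variable {R}

lemma upperTriangular.commute_of_diag_eq_one {A B : upperTriangular R}
    (hA : diag R A = 1) (hB : diag R B = 1) : Commute A B := by
  obtain ⟨A, hA10 : A 1 0 = 0⟩ := A
  obtain ⟨B, hB10 : B 1 0 = 0⟩ := B
  simp only [upperTriangular.diag, MonoidHom.coe_mk, OneHom.coe_mk, Prod.ext_iff] at hA hB
  refine Subtype.ext (Units.ext (Matrix.ext fun i j => ?_))
  fin_cases i <;> fin_cases j <;>
    simp [mul_apply, Fin.sum_univ_two, hA10, hB10, hA.1, hA.2, hB.1, hB.2, add_comm]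

theorem commute_commutatorElement_of_mem_upperTriangular {a b c d : GL (Fin 2) R}
    (ha : a ∈ upperTriangular R) (hb : b ∈ upperTriangular R)
    (hc : c ∈ upperTriangular R) (hd : d ∈ upperTriangular R) :
    Commute ⁅a, b⁆ ⁅c, d⁆ := by
  simpa [map_commutatorElement] using
    (commute_commutatorElement_of_ker_commute (upperTriangular.diag R)
      (fun _ _ => upperTriangular.commute_of_diag_eq_one) ⟨a, ha⟩ ⟨b, hb⟩ ⟨c, hc⟩ ⟨d, hd⟩).map
      (upperTriangular R).subtype

end Matrix.GeneralLinearGroup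

open Matrix GeneralLinearGroup

noncomputable def burau3 (t : ℝ) (ht : t ≠ 0) : B3 →* GL (Fin 2) ℝ :=
  PresentedGroup.toGroup (f := ![mkOfDetNeZero !![-t, 1; 0, 1] (by simpa),
      mkOfDetNeZero !![1, 0; t, -t] (by simpa)]) <| by
    rintro r (⟨i, j, hij, rfl⟩ | ⟨i, j, hij, rfl⟩)
    · fin_cases i <;> fin_cases j <;> simp at hij
      simp only [map_mul, map_inv, FreeGroup.lift_apply_of, mul_inv_eq_one]
      ext k l
      fin_cases k <;> fin_cases l <;> simp
    · omega

lemma isBurau3_burau3 (t : ℝ) (ht : t ≠ 0) : IsBurau3 t (burau3 t ht) :=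
  ⟨congrArg Units.val (PresentedGroup.toGroup.of _),
    congrArg Units.val (PresentedGroup.toGroup.of _)⟩

def γ : B3 := b3 1 ^ (-2 : ℤ) * b3 0 * (b3 1)⁻¹

namespace IsBurau3

variable {t : ℝ} {S : B3 →* GL (Fin 2) ℝ}

lemma ne_zero (hS : IsBurau3 t S) : t ≠ 0 := by
  have h := (det (S (b3 1))).ne_zero
  rw [val_det_apply, hS.2, det_fin_two_of] at h
  simpa using h

lemma coe_inv_b3_one (hS : IsBurau3 t S) :
    (((S (b3 1))⁻¹ : GL (Fin 2) ℝ) : Matrix (Fin 2) (Fin 2) ℝ) = !![1, 0; 1, -t⁻¹] := by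
  rw [coe_units_inv, hS.2]
  refine inv_eq_right_inv ?_
  simp [hS.ne_zero, one_fin_two]

lemma coe_γ (hS : IsBurau3 t S) : (S γ : Matrix (Fin 2) (Fin 2) ℝ) =
    !![1 - t, -t⁻¹; (1 - t⁻¹) * (1 - t) + t⁻¹ ^ 2, -(1 - t⁻¹) * t⁻¹ - t⁻¹ ^ 3] := by
  have hγ : γ = (b3 1)⁻¹ * (b3 1)⁻¹ * b3 0 * (b3 1)⁻¹ := by rw [γ]; group
  rw [hγ, map_mul, map_mul, map_mul, map_inv, Units.val_mul, Units.val_mul, Units.val_mul,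
    hS.coe_inv_b3_one, hS.1]
  ext i j
  fin_cases i <;> fin_cases j <;> simp <;> ring

lemma coe_γ_one_zero (hS : IsBurau3 t S) :
    (S γ : Matrix (Fin 2) (Fin 2) ℝ) 1 0 = -(t ^ 3 - 2 * t ^ 2 + t - 1) / t ^ 2 := by
  rw [hS.coe_γ]
  simp only [of_apply, cons_val', cons_val_zero, cons_val_fin_one, cons_val_one]
  field_simp [hS.ne_zero]
  ring

end IsBurau3

theorem not_commute_commutatorElement_γ : ¬ Commute ⁅b3 0, γ⁆ ⁅b3 0, γ ^ 2⁆ := by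
  intro h
  set ρ := burau3 (-1) (by norm_num)
  have hρ : IsBurau3 (-1) ρ := isBurau3_burau3 _ _
  have hσ : (ρ (b3 0) : Matrix (Fin 2) (Fin 2) ℝ) = !![1, 1; 0, 1] := by rw [hρ.1]; norm_num
  have hγ : (ρ γ : Matrix (Fin 2) (Fin 2) ℝ) = !![2, 1; 5, 3] := by rw [hρ.coe_γ]; norm_num
  have h10 := congrArg (fun A : GL (Fin 2) ℝ => (A : Matrix (Fin 2) (Fin 2) ℝ) 1 0)
    (h.map ρ).eq
  simp only [map_mul, map_pow, map_inv, commutatorElement_def, Units.val_mul, coe_units_inv,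
    Units.val_pow_eq_pow_val, hσ, hγ] at h10
  norm_num [inv_def, mul_fin_two, sq] at h10

theorem IsBurau3.not_injective_of_coe_γ_one_zero {t : ℝ} {S : B3 →* GL (Fin 2) ℝ}
    (hS : IsBurau3 t S) (hγ : (S γ : Matrix (Fin 2) (Fin 2) ℝ) 1 0 = 0) : ¬ Function.Injective S := by
  intro hinj
  have h0 : S (b3 0) ∈ upperTriangular ℝ := by simp [hS.1]
  have hcomm : Commute (S ⁅b3 0, γ⁆) (S ⁅b3 0, γ ^ 2⁆) := by
    rw [map_commutatorElement, map_commutatorElement, map_pow]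
    exact commute_commutatorElement_of_mem_upperTriangular h0 hγ h0 (pow_mem hγ 2)
  exact not_commute_commutatorElement_γ (hinj (by simpa only [map_mul] using hcomm.eq))

lemma cubic_root_bounds {x : ℝ} (hx : x ^ 3 - 2 * x ^ 2 + x - 1 = 0) : 4 / 3 < x ∧ x < 2 :=
  ⟨by nlinarith [sq_nonneg (x - 1 / 3), sq_nonneg x], by nlinarith [sq_nonneg x]⟩

lemma cubic_root_unique {x y : ℝ} (hx : x ^ 3 - 2 * x ^ 2 + x - 1 = 0)
    (hy : y ^ 3 - 2 * y ^ 2 + y - 1 = 0) : x = y := by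
  obtain ⟨hx₁, -⟩ := cubic_root_bounds hx
  obtain ⟨hy₁, -⟩ := cubic_root_bounds hy
  have hfactor : (x - y) * (x ^ 2 + x * y + y ^ 2 - 2 * x - 2 * y + 1) = 0 := by
    linear_combination hx - hy
  have hpos : 0 < x ^ 2 + x * y + y ^ 2 - 2 * x - 2 * y + 1 := by
    nlinarith [mul_pos (sub_pos.2 hx₁) (sub_pos.2 hy₁)]
  exact sub_eq_zero.1 ((mul_eq_zero.1 hfactor).resolve_right hpos.ne')

theorem burau_B3_unfaithful_cubic_root (t₀ : ℝ)
    (hroot : t₀ ^ 3 - 2 * t₀ ^ 2 + t₀ - 1 = 0)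
    (S : B3 →* GL (Fin 2) ℝ) (hS : IsBurau3 t₀ S) :
    (∃! s : ℝ, s ^ 3 - 2 * s ^ 2 + s - 1 = 0) ∧
      ((3 - Real.sqrt 5) / 2 < t₀ ∧ t₀ < (3 + Real.sqrt 5) / 2) ∧
      (S ((b3 1) ^ (-2 : ℤ) * b3 0 * (b3 1)⁻¹) : Matrix (Fin 2) (Fin 2) ℝ) 1 0 = 0 ∧
      ¬ Function.Injective S := by
  have hγ : (S γ : Matrix (Fin 2) (Fin 2) ℝ) 1 0 = 0 := by
    rw [hS.coe_γ_one_zero, hroot, neg_zero, zero_div]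
  obtain ⟨hlow, hupp⟩ := cubic_root_bounds hroot
  have hsqrt5 : 1 < Real.sqrt 5 := by
    rw [Real.lt_sqrt zero_le_one]
    norm_num
  exact ⟨⟨t₀, hroot, fun s hs => cubic_root_unique hs hroot⟩, ⟨by linarith, by linarith⟩, hγ,
    hS.not_injective_of_coe_γ_one_zero hγ⟩
end

section
/- For every real number t₀ < 0, the restriction of the Burau specialization S_{t₀} : B₃ → GL₂(ℝ) to the subgroup N is injective, the image S_{t₀}(N) is a free group of rank 2, and S_{t₀}(N) is a discrete subgroup of GL₂(ℝ). -/
open Matrix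
open scoped MatrixGroups

/-!
The matrices `S a₁` and `S a₂` act on `ℝ²`, hence on the projective line, where the four arcs
`0 ≤ s ≤ 1`, `1 ≤ s`, `s ≤ 1/t₀`, `1/t₀ ≤ s ≤ 0` (in the coordinate `s = p 0 / p 1`) tile the line
and `S aᵢ` maps the closure of the complement of one arc onto another. This is a ping-pong
configuration: a nontrivial reduced word with first letter `x` sends a point from the interior of a
suitable other arc into the arc of `x`. As the arcs are closed, no element of the image close to `1`
can move that point so far, which gives injectivity on the free group `N = ⟨a₁, a₂⟩` and
discreteness at once. Arcs are encoded as cones `{Q ≥ 0}` of quadratic forms, so that everything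
reduces to polynomial identities.
-/

open scoped Pointwise

theorem Subgroup.discreteTopology_of_isOpen {G : Type*} [Group G] [TopologicalSpace G]
    [IsTopologicalGroup G] {H : Subgroup G} {V : Set G} (hV : IsOpen V) (h1 : 1 ∈ V)
    (hHV : ∀ g ∈ H, g ∈ V → g = 1) : DiscreteTopology H := by
  refine discreteTopology_of_isOpen_singleton_one ?_
  convert hV.preimage continuous_subtype_val
  ext ⟨g, hg⟩
  simp only [Set.mem_singleton_iff, Set.mem_preimage, Subgroup.mk_eq_one]
  exact ⟨fun hg1 => hg1 ▸ h1, hHV g hg⟩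

/-- The cones `{f ≥ 0}` and `{g ≥ 0}` have disjoint interiors. -/
def Opposed {α : Type*} (f g : α → ℝ) : Prop :=
  ∃ s t : ℝ, 0 < s ∧ 0 < t ∧ ∀ p, s * f p + t * g p ≤ 0

namespace Opposed

variable {α : Type*} {f g : α → ℝ} {p : α}

theorem symm (h : Opposed f g) : Opposed g f :=
  let ⟨s, t, hs, ht, hst⟩ := h
  ⟨t, s, ht, hs, fun p => by linarith [hst p]⟩

theorem nonpos_of_nonneg (h : Opposed f g) (hp : 0 ≤ f p) : g p ≤ 0 := by
  obtain ⟨s, t, hs, ht, hst⟩ := h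
  nlinarith [hst p]

theorem neg_of_pos (h : Opposed f g) (hp : 0 < f p) : g p < 0 := by
  obtain ⟨s, t, hs, ht, hst⟩ := h
  nlinarith [hst p]

end Opposed

namespace FreeGroup

variable {ι G α : Type*} [Group G] [MulAction G α]

/-- `IsReduced [x, y]` says that `y` is not the inverse letter of `x`. -/
def IsPingPong (a : ι → G) (C : ι × Bool → Set α) : Prop :=
  ∀ x y, IsReduced [x, y] → lift a (mk [x]) • C y ⊆ C x

variable {a : ι → G} {C : ι × Bool → Set α} {p : ι × Bool → α}

theorem IsPingPong.lift_mk_smul_subset (h : IsPingPong a C)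
    {y : ι × Bool} : ∀ {x : ι × Bool} {L : List (ι × Bool)}, IsReduced (x :: L ++ [y]) →
      lift a (mk (x :: L)) • C y ⊆ C x
  | x, [], hL => h x y hL
  | x, z :: L, hL => by
    obtain ⟨hxz, hzL⟩ := isReduced_cons_cons.mp hL
    rw [← List.singleton_append, ← mul_mk, _root_.map_mul, mul_smul]
    exact (Set.smul_set_mono (h.lift_mk_smul_subset hzL)).trans
      (h x z (isReduced_cons_cons.mpr ⟨hxz, .singleton⟩))

theorem IsPingPong.exists_lift_smul_mem [Nontrivial ι] (h : IsPingPong a C)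
    (hp : ∀ x, p x ∈ C x) {w : FreeGroup ι} (hw : w ≠ 1) : ∃ x y, x ≠ y ∧ lift a w • p y ∈ C x := by
  classical
  obtain ⟨x, L, hwL⟩ := List.exists_cons_of_ne_nil (mt toWord_eq_nil_iff.mp hw)
  obtain ⟨z, hz⟩ : ∃ z, (x :: L).getLast? = some z :=
    ⟨_, List.getLast?_eq_getLast_of_ne_nil (List.cons_ne_nil x L)⟩
  obtain ⟨j, hj⟩ := exists_ne z.1
  have hred : IsReduced (x :: L ++ [(j, !x.2)]) := by
    refine List.IsChain.append (hwL ▸ isReduced_toWord) IsReduced.singleton ?_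
    simp only [hz, Option.mem_def, Option.some.injEq, List.head?_cons, forall_eq']
    exact fun h => absurd h.symm hj
  refine ⟨x, (j, !x.2), fun hx => by simp [Prod.ext_iff] at hx, ?_⟩
  rw [← mk_toWord (x := w), hwL]
  exact h.lift_mk_smul_subset hred (Set.smul_mem_smul_set (hp _))

theorem IsPingPong.injective_lift [Nontrivial ι] (h : IsPingPong a C) (hp : ∀ x, p x ∈ C x)
    (hsep : ∀ x y, x ≠ y → p y ∉ C x) : Function.Injective (lift a) := by
  refine (injective_iff_map_eq_one _).mpr fun w hw => ?_
  by_contra hw1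
  obtain ⟨x, y, hxy, hmem⟩ := h.exists_lift_smul_mem hp hw1
  exact hsep x y hxy (by simpa [hw] using hmem)

theorem IsPingPong.discreteTopology_range [Nontrivial ι] [Finite ι] [TopologicalSpace G]
    [IsTopologicalGroup G] [TopologicalSpace α] [ContinuousSMul G α] (h : IsPingPong a C)
    (hC : ∀ x, IsClosed (C x)) (hp : ∀ x, p x ∈ C x) (hsep : ∀ x y, x ≠ y → p y ∉ C x) :
    DiscreteTopology (lift a).range := by
  have hV : IsOpen (⋂ (x) (y) (_ : x ≠ y), (· • p y) ⁻¹' (C x)ᶜ : Set G) :=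
    isOpen_iInter_of_finite fun x => isOpen_iInter_of_finite fun y => isOpen_iInter_of_finite
      fun _ => (hC x).isOpen_compl.preimage (continuous_id.smul continuous_const)
  refine Subgroup.discreteTopology_of_isOpen hV (by simpa using hsep) ?_
  rintro _ ⟨w, rfl⟩ hw
  by_contra hw1
  obtain ⟨x, y, hxy, hmem⟩ := h.exists_lift_smul_mem hp (w := w) (by rintro rfl; simp at hw1)
  exact Set.mem_iInter₂.mp (Set.mem_iInter.mp hw x) y hxy hmem

theorem isPingPong_of_forms (Q : ι × Bool → α → ℝ)
    (hopp : Pairwise fun x y => Opposed (Q x) (Q y))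
    (hswap : ∀ i, ∃ c > 0, ∀ p, Q (i, true) (a i • p) = -c * Q (i, false) p) :
    IsPingPong a fun x => {p | 0 ≤ Q x p} := by
  rintro ⟨i, b⟩ y hy _ ⟨p, hp, rfl⟩
  obtain ⟨c, hc, hQ⟩ := hswap i
  have hyi : y ≠ (i, !b) := by rintro rfl; simp at hy
  have hp' : Q (i, !b) p ≤ 0 := (hopp hyi).nonpos_of_nonneg hp
  cases b <;> simp only [Bool.not_false, Bool.not_true] at hp'
  · have hQp := hQ ((a i)⁻¹ • p)
    rw [smul_inv_smul] at hQp
    simp only [lift_mk, List.map_cons, List.map_nil, List.prod_singleton, cond_false,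
      Set.mem_ofPred_eq]
    nlinarith
  · simp only [lift_mk, List.map_cons, List.map_nil, List.prod_singleton, cond_true,
      Set.mem_ofPred_eq, hQ]
    nlinarith

theorem injective_lift_and_discreteTopology_range_of_forms [Nontrivial ι] [Finite ι]
    [TopologicalSpace G] [IsTopologicalGroup G] [TopologicalSpace α] [ContinuousSMul G α]
    (Q : ι × Bool → α → ℝ) (hQ : ∀ x, Continuous (Q x))
    (hopp : Pairwise fun x y => Opposed (Q x) (Q y))
    (hswap : ∀ i, ∃ c > 0, ∀ p, Q (i, true) (a i • p) = -c * Q (i, false) p)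
    (hpos : ∀ x, ∃ p, 0 < Q x p) :
    Function.Injective (lift a) ∧ DiscreteTopology (lift a).range := by
  choose p hp using hpos
  have h := isPingPong_of_forms Q hopp hswap
  have hmem : ∀ x, p x ∈ {q | 0 ≤ Q x q} := fun x => (hp x).le
  have hsep : ∀ x y, x ≠ y → p y ∉ {q | 0 ≤ Q x q} := fun x y hxy =>
    not_le.mpr ((hopp hxy.symm).neg_of_pos (hp y))
  exact ⟨h.injective_lift hmem hsep,
    h.discreteTopology_range (fun x => isClosed_le continuous_const (hQ x)) hmem hsep⟩

end FreeGroup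

namespace Matrix.GeneralLinearGroup

variable {n R : Type*} [Fintype n] [DecidableEq n] [CommRing R]

instance instMulActionPi : MulAction (GL n R) (n → R) where
  smul g v := (g : Matrix n n R) *ᵥ v
  one_smul := one_mulVec
  mul_smul g h v := (mulVec_mulVec v (g : Matrix n n R) h).symm

theorem smul_eq_mulVec (g : GL n R) (v : n → R) : g • v = (g : Matrix n n R) *ᵥ v := rfl

instance [TopologicalSpace R] [IsTopologicalRing R] : ContinuousSMul (GL n R) (n → R) :=
  ⟨(Units.continuous_val.comp continuous_fst).matrix_mulVec continuous_snd⟩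

end Matrix.GeneralLinearGroup

namespace IsBurau3

variable {t₀ : ℝ} {S : B3 →* GL (Fin 2) ℝ}

theorem val_inv_b3_zero (hS : IsBurau3 t₀ S) (ht : t₀ ≠ 0) :
    (((S (b3 0))⁻¹ : GL (Fin 2) ℝ) : Matrix (Fin 2) (Fin 2) ℝ) = !![-t₀⁻¹, t₀⁻¹; 0, 1] := by
  refine Units.inv_eq_of_mul_eq_one_right ?_
  rw [hS.1, mul_fin_two, one_fin_two]
  simp [ht]

theorem val_a₁ (hS : IsBurau3 t₀ S) (ht : t₀ ≠ 0) :
    (S a₁ : Matrix (Fin 2) (Fin 2) ℝ) = !![1 - t₀⁻¹, -1; t₀, -t₀] := by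
  rw [a₁, map_mul, map_inv, Units.val_mul, hS.val_inv_b3_zero ht, hS.2, mul_fin_two]
  simp [ht, sub_eq_neg_add]

theorem val_a₂ (hS : IsBurau3 t₀ S) (ht : t₀ ≠ 0) :
    (S a₂ : Matrix (Fin 2) (Fin 2) ℝ) = !![-t₀⁻¹, t₀⁻¹; -1, 1 - t₀] := by
  rw [a₂, map_mul, map_inv, Units.val_mul, hS.val_inv_b3_zero ht, hS.2, mul_fin_two]
  simp [ht, sub_eq_add_neg]

end IsBurau3

/-- With `s = p 0 / p 1`, the cone `{burauForm t x ≥ 0}` is the arc `0 ≤ s ≤ 1`, `s ≤ 1/t`,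
`1 ≤ s`, `1/t ≤ s ≤ 0` of the projective line (the middle two containing `s = ∞`) for
`x = (0, false), (0, true), (1, false), (1, true)`: each form is the product of the two linear forms
vanishing at the ends of its arc. -/
def burauForm (t : ℝ) : Fin 2 × Bool → (Fin 2 → ℝ) → ℝ
  | (0, false), p => p 0 * (p 1 - p 0)
  | (0, true), p => p 1 * (t * p 0 - p 1)
  | (1, false), p => p 1 * (p 0 - p 1)
  | (1, true), p => p 0 * (t * p 0 - p 1)

section BurauForm

variable {t : ℝ}

theorem burauForm_pairwise_opposed (ht : t < 0) :
    Pairwise fun x y => Opposed (burauForm t x) (burauForm t y) := by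
  have h₁ : Opposed (burauForm t (0, false)) (burauForm t (1, false)) :=
    ⟨1, 1, one_pos, one_pos, fun p => by
      simp only [burauForm]; nlinarith [sq_nonneg (p 0 - p 1)]⟩
  have h₂ : Opposed (burauForm t (0, false)) (burauForm t (0, true)) :=
    ⟨-t, 1, neg_pos.mpr ht, one_pos, fun p => by
      simp only [burauForm]; nlinarith [sq_nonneg (p 0), sq_nonneg (p 1)]⟩
  have h₃ : Opposed (burauForm t (0, false)) (burauForm t (1, true)) :=
    ⟨1, 1, one_pos, one_pos, fun p => by
      simp only [burauForm]; nlinarith [sq_nonneg (p 0)]⟩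
  have h₄ : Opposed (burauForm t (0, true)) (burauForm t (1, true)) :=
    ⟨1, -t, one_pos, neg_pos.mpr ht, fun p => by
      simp only [burauForm]; nlinarith [sq_nonneg (t * p 0 - p 1)]⟩
  have h₅ : Opposed (burauForm t (0, true)) (burauForm t (1, false)) :=
    ⟨1, -t, one_pos, neg_pos.mpr ht, fun p => by
      simp only [burauForm]; nlinarith [sq_nonneg (p 1)]⟩
  have h₆ : Opposed (burauForm t (1, true)) (burauForm t (1, false)) :=
    ⟨1, 1, one_pos, one_pos, fun p => by
      simp only [burauForm]; nlinarith [sq_nonneg (p 0), sq_nonneg (p 1)]⟩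
  rintro ⟨i, _ | _⟩ ⟨j, _ | _⟩ hne <;> fin_cases i <;> fin_cases j <;>
    first | exact absurd rfl hne | assumption | exact Opposed.symm ‹_›

theorem burauForm_exists_pos (ht : t < 0) : ∀ x, ∃ p, 0 < burauForm t x p := by
  rintro ⟨i, _ | _⟩ <;> fin_cases i
  · exact ⟨![1, 2], show (0 : ℝ) < 1 * (2 - 1) by norm_num⟩
  · exact ⟨![2, 1], show (0 : ℝ) < 1 * (2 - 1) by norm_num⟩
  · exact ⟨![2, t], show 0 < t * (t * 2 - t) by nlinarith⟩
  · exact ⟨![1, t - 1], show (0 : ℝ) < 1 * (t * 1 - (t - 1)) by norm_num⟩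

theorem continuous_burauForm : ∀ x, Continuous (burauForm t x) := by
  rintro ⟨i, _ | _⟩ <;> fin_cases i <;> show Continuous fun p => burauForm t _ p <;>
    simp only [burauForm, Fin.isValue] <;> fun_prop

end BurauForm

theorem IsBurau3.burauForm_smul_eq_neg_mul {t₀ : ℝ} {S : B3 →* GL (Fin 2) ℝ} (hS : IsBurau3 t₀ S)
    (ht : t₀ < 0) :
    ∀ i, ∃ c > 0, ∀ p, burauForm t₀ (i, true) (![S a₁, S a₂] i • p) =
      -c * burauForm t₀ (i, false) p := by
  have ht0 : t₀ ≠ 0 := ht.ne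
  refine Fin.forall_fin_two.mpr ⟨⟨-t₀, neg_pos.mpr ht, fun p => ?_⟩, ⟨1, one_pos, fun p => ?_⟩⟩
  · simp only [burauForm, GeneralLinearGroup.smul_eq_mulVec, hS.val_a₁ ht0, mulVec, dotProduct,
      Fin.sum_univ_two, of_apply, cons_val', cons_val_zero, cons_val_one, cons_val_fin_one]
    field_simp
    ring
  · simp only [burauForm, GeneralLinearGroup.smul_eq_mulVec, hS.val_a₂ ht0, mulVec, dotProduct,
      Fin.sum_univ_two, of_apply, cons_val', cons_val_zero, cons_val_one, cons_val_fin_one]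
    field_simp
    ring

theorem MonoidHom.injective_domRestrict_range {F G H : Type*} [Group F] [Group G] [Group H]
    {f : F →* G} {g : G →* H} (hinj : Function.Injective (g.comp f)) :
    Function.Injective (g.domRestrict f.range) := by
  rintro ⟨_, w₁, rfl⟩ ⟨_, w₂, rfl⟩ h
  exact Subtype.ext (congrArg f (hinj (by simpa using h)))

theorem burau_B3_neg_on_N (t₀ : ℝ) (ht : t₀ < 0)
    (S : B3 →* GL (Fin 2) ℝ) (hS : IsBurau3 t₀ S) :
    Function.Injective (S.domRestrict N3) ∧
      Nonempty (↥(N3.map S) ≃* FreeGroup (Fin 2)) ∧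
      DiscreteTopology ↥(N3.map S) := by
  have hN : N3 = (FreeGroup.lift ![a₁, a₂]).range := by
    rw [FreeGroup.range_lift_eq_closure, Matrix.range_cons_cons_empty]
    rfl
  have hcomp : S.comp (FreeGroup.lift ![a₁, a₂]) = FreeGroup.lift ![S a₁, S a₂] :=
    FreeGroup.ext_hom _ _ fun i => by fin_cases i <;> simp
  obtain ⟨hinj, hdisc⟩ := FreeGroup.injective_lift_and_discreteTopology_range_of_forms
    (burauForm t₀) continuous_burauForm (burauForm_pairwise_opposed ht)
    (hS.burauForm_smul_eq_neg_mul ht) (burauForm_exists_pos ht)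
  rw [← hcomp] at hinj hdisc
  rw [hN, MonoidHom.map_range]
  exact ⟨MonoidHom.injective_domRestrict_range hinj, ⟨(MonoidHom.ofInjective hinj).symm⟩, hdisc⟩
end
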